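/- arXiv:2108.09636 — 3 statements merged into one kernel-verified Lean document; each statement's English description precedes it below -/
import Mathlib

section
/- Let I be a finite set, and let f : I → V be a function into some set V with f(w) ≠ w for every w ∈ I (assume I ⊆ V). Suppose I₁', I₂' ⊆ I satisfy |I₁'| = |I₂'| and f restricted to I₁' is a bijection onto I₂'. Then there exist subsets I₁'' ⊆ I₁' and I₂'' ⊆ I₂' such that |I₁''| = |I₂''| ≥ |I₁'| / 4 (rounded up), I₁'' ∩ I₂'' = ∅, and f restricted to I₁'' is a bijection onto I₂''. -/
/-!
Among the subsets `T ⊆ I₁'` disjoint from `f(T)` take one of maximal size. An element `w ∈ I₁' \ T`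
that cannot be added to `T` must satisfy `w ∈ f(T)` or `f w ∈ T` (as `f w ≠ w`); each alternative
covers at most `|T|` elements, the second by injectivity of `f` on `I₁'`. Hence `|I₁'| ≤ 3 |T|`, which is
better than the required `⌈|I₁'| / 4⌉`.
-/

namespace Finset

variable {α : Type*} [DecidableEq α] {f : α → α}

theorem disjoint_insert_image_insert {T : Finset α} {w : α} (hT : Disjoint T (T.image f))
    (hfw : f w ≠ w) (hw : w ∉ T.image f) (hfwT : f w ∉ T) :
    Disjoint (insert w T) ((insert w T).image f) := by
  rw [image_insert, disjoint_insert_left, disjoint_insert_right]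
  exact ⟨by simp [hfw.symm, hw], hfwT, hT⟩

theorem card_filter_map_mem_le {S T : Finset α} (hinj : Set.InjOn f S) :
    (S.filter fun w => f w ∈ T).card ≤ T.card :=
  card_le_card_of_injOn f (fun _ hw => (mem_filter.mp hw).2)
    (hinj.mono fun _ hw => (mem_filter.mp hw).1)

theorem exists_subset_disjoint_image_card_le_three_mul {S : Finset α} (hinj : Set.InjOn f S)
    (hfp : ∀ w ∈ S, f w ≠ w) :
    ∃ T ⊆ S, Disjoint T (T.image f) ∧ S.card ≤ 3 * T.card := by
  obtain ⟨T, hT, hmax⟩ := exists_max_image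
    (S.powerset.filter fun T => Disjoint T (T.image f)) card ⟨∅, by simp⟩
  rw [mem_filter, mem_powerset] at hT
  have hcover : S ⊆ T ∪ T.image f ∪ S.filter fun w => f w ∈ T := by
    intro w hw
    by_contra hw'
    simp only [mem_union, mem_filter, not_or, not_and] at hw'
    obtain ⟨⟨hwT, hwfT⟩, hfwT⟩ := hw'
    have hins := hmax (insert w T) (by
      rw [mem_filter, mem_powerset]
      exact ⟨insert_subset hw hT.1,
        disjoint_insert_image_insert hT.2 (hfp w hw) hwfT (hfwT hw)⟩)
    rw [card_insert_of_notMem hwT] at hins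
    omega
  refine ⟨T, hT.1, hT.2, ?_⟩
  calc S.card ≤ (T ∪ T.image f ∪ S.filter fun w => f w ∈ T).card := card_le_card hcover
    _ ≤ T.card + (T.image f).card + (S.filter fun w => f w ∈ T).card :=
        (card_union_le _ _).trans (Nat.add_le_add_right (card_union_le _ _) _)
    _ ≤ T.card + T.card + T.card :=
        Nat.add_le_add (Nat.add_le_add_left card_image_le _) (card_filter_map_mem_le hinj)
    _ = 3 * T.card := by ring

end Finset

theorem stmt_2_general {V : Type*} [DecidableEq V] (I I₁ I₂ : Finset V) (f : V → V)
    (hfp : ∀ w ∈ I, f w ≠ w) (h1 : I₁ ⊆ I)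
    (hbij : Set.BijOn f ↑I₁ ↑I₂) :
    ∃ I₁' I₂' : Finset V, I₁' ⊆ I₁ ∧ I₂' ⊆ I₂ ∧ I₁'.card = I₂'.card ∧
      (I₁.card + 3) / 4 ≤ I₁'.card ∧ Disjoint I₁' I₂' ∧ Set.BijOn f ↑I₁' ↑I₂' := by
  obtain ⟨T, hT, hdisj, hcard⟩ :=
    Finset.exists_subset_disjoint_image_card_le_three_mul hbij.injOn fun w hw => hfp w (h1 hw)
  have hinjT : Set.InjOn f T := hbij.injOn.mono (by exact_mod_cast hT)
  refine ⟨T, T.image f, hT, ?_, (Finset.card_image_of_injOn hinjT).symm, by omega, hdisj, ?_⟩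
  · rw [← Finset.coe_subset, Finset.coe_image]
    exact (hbij.mapsTo.mono_left (by exact_mod_cast hT)).image_subset
  · rw [Finset.coe_image]
    exact hinjT.bijOn_image

/-- From a fixed-point-free bijection `f : I₁' → I₂'` between equal-size subsets of `I`
one can extract disjoint matched subsets `I₁'' ⊆ I₁'`, `I₂'' ⊆ I₂'` of size at least
`⌈|I₁'|/4⌉` on which `f` is still a bijection. -/
theorem stmt_2 {V : Type*} [DecidableEq V] (I I₁ I₂ : Finset V) (f : V → V)
    (hfp : ∀ w ∈ I, f w ≠ w) (h1 : I₁ ⊆ I) (h2 : I₂ ⊆ I)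
    (hcard : I₁.card = I₂.card) (hbij : Set.BijOn f ↑I₁ ↑I₂) :
    ∃ I₁' I₂' : Finset V, I₁' ⊆ I₁ ∧ I₂' ⊆ I₂ ∧ I₁'.card = I₂'.card ∧
      (I₁.card + 3) / 4 ≤ I₁'.card ∧ Disjoint I₁' I₂' ∧ Set.BijOn f ↑I₁' ↑I₂' :=
  stmt_2_general I I₁ I₂ f hfp h1 hbij
end

section
/- Let Γ be a graph on vertex set [n], let Γ̃ be a second graph on [n], and for each vertex v let f_v be a graph isomorphism from the closed neighborhood of v in Γ to the closed neighborhood of v in Γ̃ such that f_v(v) = v. Define the map Φ on the set 𝒫 of ordered edges (v,w) of Γ by Φ(v,w) = (f_v(w), f_{f_v(w)}^{-1}(v)). Then Φ is an involution (Φ ∘ Φ = id) on 𝒫, and in particular a bijection from 𝒫 to itself. -/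
/-- The closed neighborhood of `v` in `G`, as a set of vertices. -/
def closedNbhd {n : ℕ} (G : SimpleGraph (Fin n)) (v : Fin n) : Set (Fin n) :=
  insert v (G.neighborSet v)

/-- The map `Φ(v,w) = (f_v(w), f_{f_v(w)}⁻¹(v))` is an involution, and in particular a
bijection, on the set of ordered edges of `Γ`, whenever each `f_v` is an isomorphism
(with inverse `g v`) from the closed neighborhood of `v` in `Γ` to the closed
neighborhood of `v` in `Γ̃` fixing `v`. -/
theorem stmt_3 (n : ℕ) (Γ Γ' : SimpleGraph (Fin n)) (f g : Fin n → Fin n → Fin n)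
    (hfix : ∀ v : Fin n, f v v = v)
    (hbij : ∀ v : Fin n, Set.BijOn (f v) (closedNbhd Γ v) (closedNbhd Γ' v))
    (hadj : ∀ v : Fin n, ∀ w ∈ closedNbhd Γ v, ∀ z ∈ closedNbhd Γ v,
      Γ.Adj w z ↔ Γ'.Adj (f v w) (f v z))
    (hinv : ∀ v : Fin n, Set.InvOn (g v) (f v) (closedNbhd Γ v) (closedNbhd Γ' v)) :
    (∀ p ∈ {p : Fin n × Fin n | Γ.Adj p.1 p.2},
        (fun p : Fin n × Fin n => (f p.1 p.2, g (f p.1 p.2) p.1)) p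
          ∈ {p : Fin n × Fin n | Γ.Adj p.1 p.2}) ∧
    (∀ p ∈ {p : Fin n × Fin n | Γ.Adj p.1 p.2},
        (fun p : Fin n × Fin n => (f p.1 p.2, g (f p.1 p.2) p.1))
          ((fun p : Fin n × Fin n => (f p.1 p.2, g (f p.1 p.2) p.1)) p) = p) ∧
    Set.BijOn (fun p : Fin n × Fin n => (f p.1 p.2, g (f p.1 p.2) p.1))
      {p : Fin n × Fin n | Γ.Adj p.1 p.2} {p : Fin n × Fin n | Γ.Adj p.1 p.2} := by
  have hmemv : ∀ v : Fin n, v ∈ closedNbhd Γ v := fun v => Set.mem_insert _ _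
  -- g v maps the closed Γ'-neighborhood of v into the closed Γ-neighborhood of v
  have hgmem : ∀ v y, y ∈ closedNbhd Γ' v → g v y ∈ closedNbhd Γ v := by
    intro v y hy
    obtain ⟨x, hx, hfx⟩ := (hbij v).surjOn hy
    rw [← hfx, (hinv v).1 hx]
    exact hx
  -- adjacency from closed-neighborhood membership plus ≠
  have hmem_adj : ∀ (G : SimpleGraph (Fin n)) (v x : Fin n),
      x ∈ closedNbhd G v → x ≠ v → G.Adj v x := by
    intro G v x hx hne
    rcases hx with h | h
    · exact absurd h hne
    · exact h
  -- key facts for p ∈ S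
  have hvmem : ∀ v w : Fin n, Γ.Adj v w → v ∈ closedNbhd Γ' (f v w) ∧ Γ.Adj (f v w) (g (f v w) v) := by
    intro v w hvw
    have hw : w ∈ closedNbhd Γ v := Or.inr hvw
    have hfw : f v w ∈ closedNbhd Γ' v := (hbij v).mapsTo hw
    have hfwne : f v w ≠ v := by
      intro h
      have : w = v := (hbij v).injOn hw (hmemv v) (by rw [h, hfix])
      exact Γ.irrefl (this ▸ hvw)
    have hadj' : Γ'.Adj v (f v w) := hmem_adj Γ' v (f v w) hfw hfwne
    have hvmem' : v ∈ closedNbhd Γ' (f v w) := Or.inr hadj'.symm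
    refine ⟨hvmem', ?_⟩
    have hgv : g (f v w) v ∈ closedNbhd Γ (f v w) := hgmem _ _ hvmem'
    have hgne : g (f v w) v ≠ f v w := by
      intro h
      have h1 : f (f v w) (g (f v w) v) = v := (hinv (f v w)).2 hvmem'
      rw [h, hfix] at h1
      exact Γ'.irrefl (h1 ▸ hadj')
    exact hmem_adj Γ (f v w) _ hgv hgne
  have hmaps : ∀ p ∈ {p : Fin n × Fin n | Γ.Adj p.1 p.2},
      (fun p : Fin n × Fin n => (f p.1 p.2, g (f p.1 p.2) p.1)) p
        ∈ {p : Fin n × Fin n | Γ.Adj p.1 p.2} := by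
    intro p hp
    exact (hvmem p.1 p.2 hp).2
  have hinvol : ∀ p ∈ {p : Fin n × Fin n | Γ.Adj p.1 p.2},
      (fun p : Fin n × Fin n => (f p.1 p.2, g (f p.1 p.2) p.1))
        ((fun p : Fin n × Fin n => (f p.1 p.2, g (f p.1 p.2) p.1)) p) = p := by
    intro p hp
    obtain ⟨v, w⟩ := p
    have hvw : Γ.Adj v w := hp
    obtain ⟨hvmem', _⟩ := hvmem v w hvw
    have h1 : f (f v w) (g (f v w) v) = v := (hinv (f v w)).2 hvmem'
    have hw : w ∈ closedNbhd Γ v := Or.inr hvw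
    have h2 : g v (f v w) = w := (hinv v).1 hw
    simp only [Prod.mk.injEq]
    rw [h1]
    exact ⟨rfl, h2⟩
  exact ⟨hmaps, hinvol, Set.InvOn.bijOn ⟨fun p hp => hinvol p hp, fun p hp => hinvol p hp⟩
    (fun p hp => hmaps p hp) (fun p hp => hmaps p hp)⟩
end

section
/- In an Erdős–Rényi graph Γ = G(n,p) with np = ω(log² n), with probability 1 − n^{−ω(1)}, simultaneously for every subset J ⊆ [n], the number of edges of Γ with one endpoint in J and the other in Jᶜ differs from |J|·(n−|J|)·p by at most (log(n)/√(np))·|J|·n·p. -/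
open MeasureTheory Filter
open scoped ENNReal

/-- Bernoulli measure on `Bool` with success probability `p`. -/
noncomputable def bern (p : ℝ) : Measure Bool :=
  ENNReal.ofReal p • Measure.dirac true + ENNReal.ofReal (1 - p) • Measure.dirac false

/-- The Erdős–Rényi measure `G(n,p)`. -/
noncomputable def erMeasure (n : ℕ) (p : ℝ) : Measure (Sym2 (Fin n) → Bool) :=
  Measure.pi fun _ => bern p

/-- The number of edges of the graph `ω` with one endpoint in `J` and the other in `Jᶜ`. -/
def crossCount (n : ℕ) (J : Finset (Fin n)) (ω : Sym2 (Fin n) → Bool) : ℕ :=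
  (((J ×ˢ Jᶜ).filter fun q : Fin n × Fin n => ω s(q.1, q.2) = true)).card

namespace ER19

open Finset

noncomputable def wt (p : ℝ) (b : Bool) : ℝ := if b then p else 1 - p

lemma wt_nonneg {p : ℝ} (h0 : 0 ≤ p) (h1 : p ≤ 1) (b : Bool) : 0 ≤ wt p b := by
  cases b <;> simp [wt] <;> linarith

noncomputable def W (n : ℕ) (p : ℝ) (ω : Sym2 (Fin n) → Bool) : ℝ := ∏ e, wt p (ω e)

lemma W_nonneg {n : ℕ} {p : ℝ} (h0 : 0 ≤ p) (h1 : p ≤ 1) (ω : Sym2 (Fin n) → Bool) :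
    0 ≤ W n p ω :=
  Finset.prod_nonneg fun _ _ => wt_nonneg h0 h1 _

lemma bern_singleton {p : ℝ} (b : Bool) :
    bern p {b} = ENNReal.ofReal (wt p b) := by
  cases b <;>
    simp [bern, wt, Measure.dirac_apply, Set.indicator, Measure.add_apply, Measure.smul_apply]

instance bern_finite (p : ℝ) : IsFiniteMeasure (bern p) := by
  constructor
  have : bern p Set.univ = ENNReal.ofReal p + ENNReal.ofReal (1 - p) := by
    simp [bern, Measure.add_apply, Measure.smul_apply]
  rw [this]
  exact ENNReal.add_lt_top.2 ⟨ENNReal.ofReal_lt_top, ENNReal.ofReal_lt_top⟩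

lemma erMeasure_singleton {n : ℕ} {p : ℝ} (h0 : 0 ≤ p) (h1 : p ≤ 1)
    (ω : Sym2 (Fin n) → Bool) :
    erMeasure n p {ω} = ENNReal.ofReal (W n p ω) := by
  have : ({ω} : Set (Sym2 (Fin n) → Bool)) = Set.pi Set.univ (fun e => {ω e}) := by
    ext f; simp [Set.eq_univ_iff_forall, funext_iff, Set.mem_pi]
  rw [erMeasure, this, Measure.pi_pi]
  simp only [bern_singleton]
  rw [W, ← ENNReal.ofReal_prod_of_nonneg]
  exact fun e _ => wt_nonneg h0 h1 _

lemma erMeasure_set_le {n : ℕ} {p : ℝ} (h0 : 0 ≤ p) (h1 : p ≤ 1)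
    (S : Set (Sym2 (Fin n) → Bool)) [DecidablePred (· ∈ S)] :
    erMeasure n p S ≤ ENNReal.ofReal (∑ ω ∈ univ.filter (· ∈ S), W n p ω) := by
  classical
  have hsub : S ⊆ ⋃ ω ∈ univ.filter (· ∈ S), ({ω} : Set (Sym2 (Fin n) → Bool)) := by
    intro ω hω
    exact Set.mem_biUnion (Finset.mem_filter.mpr ⟨Finset.mem_univ _, hω⟩) rfl
  calc erMeasure n p S ≤ erMeasure n p (⋃ ω ∈ univ.filter (· ∈ S), {ω}) := measure_mono hsub
    _ ≤ ∑ ω ∈ univ.filter (· ∈ S), erMeasure n p {ω} := measure_biUnion_finset_le _ _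
    _ = ENNReal.ofReal (∑ ω ∈ univ.filter (· ∈ S), W n p ω) := by
        rw [ENNReal.ofReal_sum_of_nonneg fun ω _ => W_nonneg h0 h1 ω]
        exact Finset.sum_congr rfl fun ω _ => erMeasure_singleton h0 h1 ω

def EJ (n : ℕ) (J : Finset (Fin n)) : Finset (Sym2 (Fin n)) :=
  (J ×ˢ Jᶜ).image fun q => s(q.1, q.2)

lemma injOn_mk (n : ℕ) (J : Finset (Fin n)) :
    Set.InjOn (fun q : Fin n × Fin n => s(q.1, q.2)) ((J ×ˢ Jᶜ : Finset _) : Set _) := by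
  rintro ⟨a, b⟩ hab ⟨c, d⟩ hcd h
  simp only [coe_product, Set.mem_prod, mem_coe, Finset.mem_compl] at hab hcd
  simp only [Sym2.eq, Sym2.rel_iff', Prod.mk.injEq, Prod.swap_prod_mk] at h
  rcases h with ⟨h1, h2⟩ | ⟨h1, h2⟩
  · simp [h1, h2]
  · exact absurd (h1 ▸ hab.1) hcd.2

lemma card_EJ (n : ℕ) (J : Finset (Fin n)) :
    (EJ n J).card = J.card * Jᶜ.card := by
  rw [EJ, Finset.card_image_of_injOn (injOn_mk n J), Finset.card_product]

lemma crossCount_eq (n : ℕ) (J : Finset (Fin n)) (ω : Sym2 (Fin n) → Bool) :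
    (crossCount n J ω : ℝ) = ∑ e ∈ EJ n J, (if ω e then (1 : ℝ) else 0) := by
  rw [crossCount, Finset.card_filter, EJ, Finset.sum_image (fun x hx y hy h =>
    injOn_mk n J (by exact_mod_cast hx) (by exact_mod_cast hy) h)]
  push_cast
  exact Finset.sum_congr rfl fun q _ => by by_cases h : ω s(q.1, q.2) <;> simp [h]

lemma tilt (n : ℕ) (p l : ℝ) (J : Finset (Fin n)) :
    ∑ ω : Sym2 (Fin n) → Bool, W n p ω * Real.exp (l * (crossCount n J ω))
      = (1 - p + p * Real.exp l) ^ (J.card * Jᶜ.card) := by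
  classical
  have key : ∀ ω : Sym2 (Fin n) → Bool,
      W n p ω * Real.exp (l * (crossCount n J ω))
        = ∏ e, (wt p (ω e) *
            (if e ∈ EJ n J then Real.exp (l * (if ω e then (1:ℝ) else 0)) else 1)) := by
    intro ω
    rw [Finset.prod_mul_distrib, crossCount_eq, Finset.mul_sum, Real.exp_sum]
    congr 1
    rw [Finset.prod_ite_mem, Finset.univ_inter]
  simp only [key]
  rw [← Fintype.prod_sum fun e b => wt p b *
      (if e ∈ EJ n J then Real.exp (l * (if b then (1:ℝ) else 0)) else 1)]
  have : ∀ e : Sym2 (Fin n), (∑ b : Bool, wt p b *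
      (if e ∈ EJ n J then Real.exp (l * (if b then (1:ℝ) else 0)) else 1))
      = if e ∈ EJ n J then (1 - p + p * Real.exp l) else 1 := by
    intro e
    by_cases h : e ∈ EJ n J <;> simp [h, wt, Fintype.sum_bool] <;> ring
  rw [Finset.prod_congr rfl fun e _ => this e, Finset.prod_ite_mem, Finset.univ_inter,
    Finset.prod_const, card_EJ]

lemma pow_base_le (p y : ℝ) (h0 : 0 ≤ p) (h1 : p ≤ 1) (hy : 0 ≤ y) (N : ℕ) :
    (1 - p + p * y) ^ N ≤ Real.exp ((N : ℝ) * (p * (y - 1))) := by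
  have hb : 0 ≤ 1 - p + p * y := by nlinarith
  have hle : 1 - p + p * y ≤ Real.exp (p * (y - 1)) := by
    have := Real.add_one_le_exp (p * (y - 1))
    nlinarith
  calc (1 - p + p * y) ^ N ≤ (Real.exp (p * (y - 1))) ^ N := pow_le_pow_left₀ hb hle N
    _ = Real.exp ((N : ℝ) * (p * (y - 1))) := by
        rw [← Real.exp_nat_mul]

lemma upper_tail (n : ℕ) (p : ℝ) (h0 : 0 ≤ p) (h1 : p ≤ 1) (J : Finset (Fin n))
    (a l : ℝ) (hl : 0 ≤ l) :
    ∑ ω ∈ univ.filter (fun ω => a ≤ (crossCount n J ω : ℝ)), W n p ω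
      ≤ Real.exp (((J.card * Jᶜ.card : ℕ) : ℝ) * (p * (Real.exp l - 1)) - l * a) := by
  classical
  have step1 : ∑ ω ∈ univ.filter (fun ω => a ≤ (crossCount n J ω : ℝ)), W n p ω
      ≤ ∑ ω : Sym2 (Fin n) → Bool,
          W n p ω * (Real.exp (l * (crossCount n J ω)) * Real.exp (-(l * a))) := by
    refine le_trans (Finset.sum_le_sum fun ω hω => ?_)
      (Finset.sum_le_sum_of_subset_of_nonneg (Finset.filter_subset _ _) fun ω _ _ =>
        mul_nonneg (W_nonneg h0 h1 ω) (by positivity))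
    have ha : a ≤ (crossCount n J ω : ℝ) := (Finset.mem_filter.mp hω).2
    have : (1 : ℝ) ≤ Real.exp (l * (crossCount n J ω)) * Real.exp (-(l * a)) := by
      rw [← Real.exp_add]
      refine Real.one_le_exp ?_
      nlinarith
    nlinarith [W_nonneg h0 h1 ω]
  calc ∑ ω ∈ univ.filter (fun ω => a ≤ (crossCount n J ω : ℝ)), W n p ω
      ≤ ∑ ω : Sym2 (Fin n) → Bool,
          W n p ω * (Real.exp (l * (crossCount n J ω)) * Real.exp (-(l * a))) := step1
    _ = (∑ ω : Sym2 (Fin n) → Bool, W n p ω * Real.exp (l * (crossCount n J ω)))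
          * Real.exp (-(l * a)) := by
        rw [Finset.sum_mul]; exact Finset.sum_congr rfl fun ω _ => by ring
    _ = (1 - p + p * Real.exp l) ^ (J.card * Jᶜ.card) * Real.exp (-(l * a)) := by
        rw [tilt]
    _ ≤ Real.exp (((J.card * Jᶜ.card : ℕ) : ℝ) * (p * (Real.exp l - 1))) *
          Real.exp (-(l * a)) := by
        exact mul_le_mul_of_nonneg_right
          (pow_base_le p (Real.exp l) h0 h1 (Real.exp_nonneg l) _) (Real.exp_nonneg _)
    _ = Real.exp (((J.card * Jᶜ.card : ℕ) : ℝ) * (p * (Real.exp l - 1)) - l * a) := by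
        rw [← Real.exp_add]; ring_nf

lemma lower_tail (n : ℕ) (p : ℝ) (h0 : 0 ≤ p) (h1 : p ≤ 1) (J : Finset (Fin n))
    (a l : ℝ) (hl : 0 ≤ l) :
    ∑ ω ∈ univ.filter (fun ω => (crossCount n J ω : ℝ) ≤ a), W n p ω
      ≤ Real.exp (((J.card * Jᶜ.card : ℕ) : ℝ) * (p * (Real.exp (-l) - 1)) + l * a) := by
  classical
  have step1 : ∑ ω ∈ univ.filter (fun ω => (crossCount n J ω : ℝ) ≤ a), W n p ω
      ≤ ∑ ω : Sym2 (Fin n) → Bool,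
          W n p ω * (Real.exp (-l * (crossCount n J ω)) * Real.exp (l * a)) := by
    refine le_trans (Finset.sum_le_sum fun ω hω => ?_)
      (Finset.sum_le_sum_of_subset_of_nonneg (Finset.filter_subset _ _) fun ω _ _ =>
        mul_nonneg (W_nonneg h0 h1 ω) (by positivity))
    have ha : (crossCount n J ω : ℝ) ≤ a := (Finset.mem_filter.mp hω).2
    have : (1 : ℝ) ≤ Real.exp (-l * (crossCount n J ω)) * Real.exp (l * a) := by
      rw [← Real.exp_add]
      refine Real.one_le_exp ?_
      nlinarith
    nlinarith [W_nonneg h0 h1 ω]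
  calc ∑ ω ∈ univ.filter (fun ω => (crossCount n J ω : ℝ) ≤ a), W n p ω
      ≤ ∑ ω : Sym2 (Fin n) → Bool,
          W n p ω * (Real.exp (-l * (crossCount n J ω)) * Real.exp (l * a)) := step1
    _ = (∑ ω : Sym2 (Fin n) → Bool, W n p ω * Real.exp (-l * (crossCount n J ω)))
          * Real.exp (l * a) := by
        rw [Finset.sum_mul]; exact Finset.sum_congr rfl fun ω _ => by ring
    _ = (1 - p + p * Real.exp (-l)) ^ (J.card * Jᶜ.card) * Real.exp (l * a) := by
        rw [tilt]
    _ ≤ Real.exp (((J.card * Jᶜ.card : ℕ) : ℝ) * (p * (Real.exp (-l) - 1))) *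
          Real.exp (l * a) := by
        exact mul_le_mul_of_nonneg_right
          (pow_base_le p (Real.exp (-l)) h0 h1 (Real.exp_nonneg _) _) (Real.exp_nonneg _)
    _ = Real.exp (((J.card * Jᶜ.card : ℕ) : ℝ) * (p * (Real.exp (-l) - 1)) + l * a) := by
        rw [← Real.exp_add]

lemma exp_quad {l : ℝ} (h0 : 0 ≤ l) (h1 : l ≤ 1) : Real.exp l ≤ 1 + l + l ^ 2 := by
  have h := Real.exp_bound' h0 h1 (n := 2) (by norm_num)
  simp [Finset.sum_range_succ, Nat.factorial] at h
  nlinarith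

lemma exp_neg_quad {l : ℝ} (h0 : 0 ≤ l) : Real.exp (-l) ≤ 1 - l + l ^ 2 := by
  have h1 : 1 + l ≤ Real.exp l := by linarith [Real.add_one_le_exp l]
  have hq : 0 ≤ 1 - l + l ^ 2 := by nlinarith [sq_nonneg (l - 1)]
  have h2 : Real.exp (-l) = 1 / Real.exp l := by
    rw [Real.exp_neg]; ring
  have hp : (0:ℝ) < Real.exp l := Real.exp_pos l
  rw [h2, div_le_iff₀ hp]
  nlinarith [mul_le_mul_of_nonneg_left h1 hq, pow_nonneg h0 3]

set_option maxHeartbeats 2000000 in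
lemma perJ (n : ℕ) (p : ℝ) (h0 : 0 ≤ p) (h1 : p ≤ 1) (hL : 1 ≤ Real.log n)
    (hnp : Real.log n ^ 2 ≤ n * p) (J : Finset (Fin n)) (hJ : J.Nonempty) :
    erMeasure n p {ω | ¬(|((crossCount n J ω : ℝ)) - J.card * ((n : ℝ) - J.card) * p| ≤
            Real.log n / Real.sqrt (n * p) * J.card * n * p)} ≤
      ENNReal.ofReal (2 * Real.exp (-(J.card : ℝ) * Real.log n ^ 2 / 4)) := by
  classical
  set L := Real.log n with hLdef
  set s := Real.sqrt (n * p) with hsdef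
  set r : ℝ := (J.card : ℝ) with hrdef
  have hnp0 : 0 < (n : ℝ) * p := lt_of_lt_of_le (by nlinarith) hnp
  have hp_pos : 0 < p := by
    rcases lt_or_ge 0 p with h | h
    · exact h
    · exfalso
      have : (n : ℝ) * p ≤ 0 := mul_nonpos_of_nonneg_of_nonpos (Nat.cast_nonneg n) h
      linarith
  have hn0 : 0 < (n : ℝ) := by
    by_contra h
    push_neg at h
    nlinarith
  have hs2 : s * s = (n : ℝ) * p := Real.mul_self_sqrt hnp0.le
  have hs_pos : 0 < s := Real.sqrt_pos.mpr hnp0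
  have hLs : L ≤ s := by
    nlinarith [hs2, hnp, sq_nonneg (s - L), sq_nonneg (s + L)]
  have hr1 : 1 ≤ r := by
    have h := Finset.card_pos.mpr hJ
    rw [hrdef]
    exact_mod_cast h
  set t : ℝ := r * L * s with htdef
  have ht_pos : 0 < t := by
    have := mul_pos (mul_pos (lt_of_lt_of_le one_pos hr1) (lt_of_lt_of_le one_pos hL)) hs_pos
    rw [htdef]; exact this
  have hcJ : (Jᶜ.card : ℝ) = (n : ℝ) - r := by
    have h := Finset.card_add_card_compl J
    simp only [Fintype.card_fin] at h
    have h2 : (J.card : ℝ) + (Jᶜ.card : ℝ) = (n : ℝ) := by exact_mod_cast h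
    rw [hrdef]; linarith
  set M : ℝ := ((J.card * Jᶜ.card : ℕ) : ℝ) * p with hMdef
  have hMeq : M = r * ((n : ℝ) - r) * p := by
    rw [hMdef]; push_cast; rw [hcJ, ← hrdef]
  have hM0 : 0 ≤ M := by rw [hMdef]; positivity
  have hteq : L / s * r * (n : ℝ) * p = t := by
    have h : L / s * r * (n : ℝ) * p = r * L * ((n : ℝ) * p) / s := by ring
    rw [h, ← hs2, htdef]
    field_simp
  have htsq : t ^ 2 = r ^ 2 * L ^ 2 * ((n : ℝ) * p) := by
    rw [htdef]
    linear_combination (r ^ 2 * L ^ 2) * hs2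
  have ht2 : r * L ^ 2 * M ≤ t ^ 2 := by
    rw [htsq, hMeq]
    have hrn : (n : ℝ) - r ≤ (n : ℝ) := by linarith
    have hcube : 0 ≤ r ^ 3 * L ^ 2 * p := by positivity
    nlinarith [hcube]
  have htL : r * L ^ 2 ≤ t := by
    rw [htdef]
    nlinarith [hr1, hL, hLs]
  set X : (Sym2 (Fin n) → Bool) → ℝ := fun ω => (crossCount n J ω : ℝ) with hXdef
  -- upper tail bound
  have hup : ∑ ω ∈ univ.filter (fun ω => M + t ≤ X ω), W n p ω
      ≤ Real.exp (-(r * L ^ 2) / 4) := by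
    have hMulU : ∀ l : ℝ, ((J.card * Jᶜ.card : ℕ) : ℝ) * (p * (Real.exp l - 1))
        = M * (Real.exp l - 1) := fun l => by rw [hMdef]; ring
    rcases le_or_gt t (2 * M) with hc | hc
    · have hMpos : 0 < M := by nlinarith
      set l : ℝ := t / (2 * M) with hldef
      have hl0 : 0 < l := div_pos ht_pos (by linarith)
      have hl1 : l ≤ 1 := by rw [hldef, div_le_one (by linarith)]; linarith
      have hlt : l * (2 * M) = t := div_mul_cancel₀ t (by linarith)
      refine le_trans (upper_tail n p h0 h1 J (M + t) l hl0.le) ?_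
      rw [Real.exp_le_exp, hMulU l]
      have he : Real.exp l ≤ 1 + l + l ^ 2 := exp_quad hl0.le hl1
      nlinarith [ht2, hlt, mul_nonneg hM0 (sq_nonneg l), mul_le_mul_of_nonneg_left he hM0,
        mul_pos hMpos hl0, mul_pos (mul_pos hMpos hl0) hl0]
    · refine le_trans (upper_tail n p h0 h1 J (M + t) 1 one_pos.le) ?_
      rw [Real.exp_le_exp, hMulU 1]
      have he : Real.exp 1 < 2.7182818286 := Real.exp_one_lt_d9
      nlinarith [htL, hM0, ht_pos]
  -- lower tail bound
  have hlo : ∑ ω ∈ univ.filter (fun ω => X ω ≤ M - t), W n p ω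
      ≤ Real.exp (-(r * L ^ 2) / 4) := by
    have hMulL : ∀ l : ℝ, ((J.card * Jᶜ.card : ℕ) : ℝ) * (p * (Real.exp (-l) - 1))
        = M * (Real.exp (-l) - 1) := fun l => by rw [hMdef]; ring
    rcases eq_or_lt_of_le hM0 with hM00 | hMpos
    · have hempty : univ.filter (fun ω => X ω ≤ M - t) = ∅ := by
        rw [Finset.filter_eq_empty_iff]
        intro ω _
        have hX0 : 0 ≤ X ω := Nat.cast_nonneg _
        push_neg
        rw [← hM00]
        linarith
      rw [hempty, Finset.sum_empty]
      positivity
    · set l : ℝ := t / (2 * M) with hldef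
      have hl0 : 0 < l := div_pos ht_pos (by linarith)
      have hlt : l * (2 * M) = t := div_mul_cancel₀ t (by linarith)
      refine le_trans (lower_tail n p h0 h1 J (M - t) l hl0.le) ?_
      rw [Real.exp_le_exp, hMulL l]
      have he : Real.exp (-l) ≤ 1 - l + l ^ 2 := exp_neg_quad hl0.le
      nlinarith [ht2, hlt, mul_nonneg hM0 (sq_nonneg l), mul_le_mul_of_nonneg_left he hM0,
        mul_pos hMpos hl0, mul_pos (mul_pos hMpos hl0) hl0]
  -- combine
  refine le_trans (erMeasure_set_le h0 h1 _) (ENNReal.ofReal_le_ofReal ?_)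
  have hsubset : (univ.filter (· ∈ {ω | ¬(|X ω - r * ((n : ℝ) - r) * p| ≤
        L / s * r * n * p)}))
      ⊆ (univ.filter fun ω => M + t ≤ X ω) ∪ (univ.filter fun ω => X ω ≤ M - t) := by
    intro ω hω
    simp only [Finset.mem_filter, Finset.mem_univ, true_and, Set.mem_setOf_eq] at hω
    rw [hteq, ← hMeq, not_le] at hω
    rw [Finset.mem_union, Finset.mem_filter, Finset.mem_filter]
    rcases lt_abs.mp hω with h | h
    · exact Or.inl ⟨Finset.mem_univ _, by linarith⟩
    · exact Or.inr ⟨Finset.mem_univ _, by linarith⟩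
  have hmono := Finset.sum_le_sum_of_subset_of_nonneg hsubset
    (fun ω _ _ => W_nonneg h0 h1 ω)
  have hunion : ∑ ω ∈ ((univ.filter fun ω => M + t ≤ X ω) ∪
        (univ.filter fun ω => X ω ≤ M - t)), W n p ω
      ≤ (∑ ω ∈ univ.filter (fun ω => M + t ≤ X ω), W n p ω)
        + ∑ ω ∈ univ.filter (fun ω => X ω ≤ M - t), W n p ω := by
    have h := Finset.sum_union_inter (s₁ := univ.filter fun ω => M + t ≤ X ω)
      (s₂ := univ.filter fun ω => X ω ≤ M - t) (f := W n p)
    have hnn : 0 ≤ ∑ ω ∈ ((univ.filter fun ω => M + t ≤ X ω) ∩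
        (univ.filter fun ω => X ω ≤ M - t)), W n p ω :=
      Finset.sum_nonneg fun ω _ => W_nonneg h0 h1 ω
    linarith
  have hfinal : -(r * L ^ 2) / 4 = -r * L ^ 2 / 4 := by ring
  calc ∑ ω ∈ univ.filter (· ∈ {ω | ¬(|X ω - r * ((n : ℝ) - r) * p| ≤
          L / s * r * n * p)}), W n p ω
      ≤ _ := hmono
    _ ≤ _ := hunion
    _ ≤ 2 * Real.exp (-(r * L ^ 2) / 4) := by linarith
    _ = 2 * Real.exp (-r * L ^ 2 / 4) := by rw [hfinal]



lemma bad_empty (n : ℕ) (p : ℝ) (ω : Sym2 (Fin n) → Bool) :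
    |((crossCount n (∅ : Finset (Fin n)) ω : ℝ)) -
        (∅ : Finset (Fin n)).card * ((n : ℝ) - (∅ : Finset (Fin n)).card) * p| ≤
      Real.log n / Real.sqrt (n * p) * (∅ : Finset (Fin n)).card * n * p := by
  simp [crossCount]

end ER19

set_option maxHeartbeats 2000000 in
/-- In `G(n, pₙ)` with `n pₙ = ω(log² n)`, with probability `1 − n^{−ω(1)}`,
simultaneously for every `J ⊆ [n]` the number of crossing edges between `J` and `Jᶜ`
differs from `|J|(n−|J|)pₙ` by at most `(log n/√(n pₙ))·|J|·n·pₙ`. -/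
theorem stmt_19 (p : ℕ → ℝ) (hp0 : ∀ n, 0 ≤ p n) (hp1 : ∀ n, p n ≤ 1)
    (hω : Tendsto (fun n : ℕ => (n : ℝ) * p n / Real.log n ^ 2) atTop atTop) :
    ∀ c : ℝ, 0 < c → ∀ᶠ n : ℕ in atTop,
      erMeasure n (p n) {ω | ∃ J : Finset (Fin n),
          ¬(|((crossCount n J ω : ℝ)) - J.card * ((n : ℝ) - J.card) * p n| ≤
            Real.log n / Real.sqrt (n * p n) * J.card * n * p n)} ≤
        ENNReal.ofReal ((n : ℝ) ^ (-c)) := by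
  classical
  intro c hc
  have hlog : Tendsto (fun n : ℕ => Real.log n) atTop atTop :=
    Real.tendsto_log_atTop.comp tendsto_natCast_atTop_atTop
  have h1 : ∀ᶠ n : ℕ in atTop, 4 * (3 + c) ≤ Real.log n ∧ 1 ≤ Real.log n :=
    (hlog.eventually_ge_atTop _).and (hlog.eventually_ge_atTop 1)
  have h2 : ∀ᶠ n : ℕ in atTop, 1 ≤ (n : ℝ) * p n / Real.log n ^ 2 :=
    hω.eventually_ge_atTop 1
  filter_upwards [h1, h2] with n hn hdiv
  obtain ⟨hbig, hL⟩ := hn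
  have hL2 : (0:ℝ) < Real.log n ^ 2 := by nlinarith
  have hnp : Real.log n ^ 2 ≤ (n : ℝ) * p n := by
    rw [le_div_iff₀ hL2] at hdiv
    linarith
  set L := Real.log n with hLdef
  have hn0 : (0:ℝ) < n := by
    by_contra h
    push_neg at h
    have hn00 : (n:ℝ) = 0 := le_antisymm h (Nat.cast_nonneg n)
    rw [hLdef] at hL
    rw [hn00] at hL
    simp [Real.log_zero] at hL
    linarith
  have hexpL : (n : ℝ) = Real.exp L := (Real.exp_log hn0).symm
  -- the union bound
  set f : ℕ → ℝ := fun k => if k = 0 then 0 else 2 * Real.exp (-(k:ℝ) * L ^ 2 / 4) with hfdef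
  have hf0 : ∀ k, 0 ≤ f k := by
    intro k
    rw [hfdef]
    dsimp only
    split <;> positivity
  have hstep1 : erMeasure n (p n) {ω | ∃ J : Finset (Fin n),
          ¬(|((crossCount n J ω : ℝ)) - J.card * ((n : ℝ) - J.card) * p n| ≤
            Real.log n / Real.sqrt (n * p n) * J.card * n * p n)}
      ≤ ∑ J : Finset (Fin n), ENNReal.ofReal (f J.card) := by
    have hcover : {ω : Sym2 (Fin n) → Bool | ∃ J : Finset (Fin n),
          ¬(|((crossCount n J ω : ℝ)) - J.card * ((n : ℝ) - J.card) * p n| ≤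
            Real.log n / Real.sqrt (n * p n) * J.card * n * p n)}
        = ⋃ J : Finset (Fin n), {ω | ¬(|((crossCount n J ω : ℝ)) -
            J.card * ((n : ℝ) - J.card) * p n| ≤
            Real.log n / Real.sqrt (n * p n) * J.card * n * p n)} := by
      ext ω
      simp [Set.mem_iUnion]
    rw [hcover]
    refine le_trans (measure_iUnion_le _) ?_
    rw [tsum_fintype]
    refine Finset.sum_le_sum fun J _ => ?_
    rcases eq_or_ne J ∅ with rfl | hJne
    · have : {ω : Sym2 (Fin n) → Bool | ¬(|((crossCount n (∅ : Finset (Fin n)) ω : ℝ)) -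
          (∅ : Finset (Fin n)).card * ((n : ℝ) - (∅ : Finset (Fin n)).card) * p n| ≤
          Real.log n / Real.sqrt (n * p n) * (∅ : Finset (Fin n)).card * n * p n)} = ∅ := by
        rw [Set.eq_empty_iff_forall_notMem]
        intro ω hω
        exact hω (ER19.bad_empty n (p n) ω)
      rw [this]
      simp
    · have hJ : J.Nonempty := Finset.nonempty_iff_ne_empty.mpr hJne
      refine le_trans (ER19.perJ n (p n) (hp0 n) (hp1 n) hL hnp J hJ) ?_
      have : f J.card = 2 * Real.exp (-(J.card : ℝ) * L ^ 2 / 4) := by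
        rw [hfdef]
        simp [Finset.card_eq_zero, hJne]
      rw [this]
  refine le_trans hstep1 ?_
  rw [← ENNReal.ofReal_sum_of_nonneg (fun J _ => hf0 J.card)]
  refine ENNReal.ofReal_le_ofReal ?_
  -- real-valued count: group by cardinality
  have hgroup : ∑ J : Finset (Fin n), f J.card
      = ∑ k ∈ Finset.range (n + 1), (Nat.choose n k) • f k := by
    rw [← Finset.powerset_univ, Finset.powerset_card_disjiUnion]
    erw [Finset.sum_disjiUnion]
    rw [show (Finset.univ : Finset (Fin n)).card = n from Finset.card_univ.trans (Fintype.card_fin n)]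
    refine Finset.sum_congr rfl fun k _ => ?_
    rw [Finset.sum_powersetCard]
    simp [Finset.card_univ]
  rw [hgroup]
  have hterm : ∀ k ∈ Finset.range (n + 1),
      (Nat.choose n k) • f k ≤ 2 * Real.exp (L - L ^ 2 / 4) := by
    intro k _
    rcases Nat.eq_zero_or_pos k with rfl | hk
    · rw [hfdef]
      simp
      positivity
    · have hk1 : (1:ℝ) ≤ (k:ℝ) := by exact_mod_cast hk
      have hfk : f k = 2 * Real.exp (-(k:ℝ) * L ^ 2 / 4) := by
        rw [hfdef]; simp [Nat.pos_iff_ne_zero.mp hk]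
      rw [nsmul_eq_mul, hfk]
      have hch : ((Nat.choose n k : ℕ) : ℝ) ≤ (n:ℝ) ^ k := by
        exact_mod_cast Nat.choose_le_pow n k
      have hpow : (n:ℝ) ^ k = Real.exp ((k:ℝ) * L) := by
        rw [hexpL, ← Real.exp_nat_mul]
      have h1 : (Nat.choose n k : ℝ) * (2 * Real.exp (-(k:ℝ) * L ^ 2 / 4))
          ≤ 2 * Real.exp ((k:ℝ) * L - (k:ℝ) * L ^ 2 / 4) := by
        rw [Real.exp_sub]
        rw [hpow] at hch
        have he1 : (0:ℝ) < Real.exp (-(k:ℝ) * L ^ 2 / 4) := Real.exp_pos _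
        have heq : Real.exp ((k:ℝ) * L) / Real.exp ((k:ℝ) * L ^ 2 / 4)
            = Real.exp ((k:ℝ) * L) * Real.exp (-(k:ℝ) * L ^ 2 / 4) := by
          rw [← Real.exp_sub, ← Real.exp_add]
          ring_nf
        rw [heq]
        nlinarith [Real.exp_pos ((k:ℝ) * L)]
      refine le_trans h1 ?_
      have : (k:ℝ) * L - (k:ℝ) * L ^ 2 / 4 ≤ L - L ^ 2 / 4 := by
        have hq : L ≤ L ^ 2 / 4 := by nlinarith
        nlinarith
      nlinarith [Real.exp_le_exp.mpr this, Real.exp_pos (L - L ^ 2 / 4),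
        Real.exp_pos ((k:ℝ) * L - (k:ℝ) * L ^ 2 / 4)]
  have hnn : (n:ℝ) ^ (-c) = Real.exp (-c * L) := by
    rw [Real.rpow_def_of_pos hn0]
    rw [hLdef]; ring_nf
  calc ∑ k ∈ Finset.range (n + 1), (Nat.choose n k) • f k
      ≤ ∑ _k ∈ Finset.range (n + 1), 2 * Real.exp (L - L ^ 2 / 4) :=
        Finset.sum_le_sum hterm
    _ = ((n:ℝ) + 1) * (2 * Real.exp (L - L ^ 2 / 4)) := by
        rw [Finset.sum_const, Finset.card_range]
        push_cast
        ring
    _ ≤ (n:ℝ) ^ (-c) := by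
      rw [hnn, hexpL]
      have h4 : Real.exp L + 1 ≤ 2 * Real.exp L := by
        nlinarith [Real.one_le_exp (by linarith : (0:ℝ) ≤ L)]
      have hprod : (Real.exp L + 1) * (2 * Real.exp (L - L ^ 2 / 4))
          ≤ Real.exp (Real.log 4 + (2 * L - L ^ 2 / 4)) := by
        rw [Real.exp_add, Real.exp_log (by norm_num : (0:ℝ) < 4)]
        have hsplit : Real.exp (2 * L - L ^ 2 / 4)
            = Real.exp L * Real.exp (L - L ^ 2 / 4) := by
          rw [← Real.exp_add]
          ring_nf
        rw [hsplit]
        nlinarith [Real.exp_pos (L - L ^ 2 / 4), Real.exp_pos L]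
      refine le_trans hprod (Real.exp_le_exp.mpr ?_)
      have hlog4 : Real.log 4 ≤ 3 := by
        nlinarith [Real.log_le_sub_one_of_pos (by norm_num : (0:ℝ) < 4)]
      nlinarith [mul_le_mul_of_nonneg_left hbig (by linarith : (0:ℝ) ≤ L / 4),
        mul_pos hc (lt_of_lt_of_le one_pos hL)]
end
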